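/- Let P be any poset on [n], let G = inc(P) be its incomparability graph, and fix N ≥ 1. Then X_G(x_1,…,x_N;t) = Σ_{σ∈S_n} t^{inv_G(σ)} F_{n,[n−1]∖Des_P(σ)}(x_1,…,x_N) in ℤ[x_1,…,x_N][t]. (This is equivalent, via the involution ω sending F_{n,S} to F_{n,[n−1]∖S}, to the expansion ωX_G(x,t) = Σ_σ t^{inv_G(σ)} F_{n,Des_P(σ)}.) -/

import Mathlib

open scoped Classical

/-- `[m]_q = 1 + q + ⋯ + q^{m-1}` for an element `q` of a semiring. -/
def qIntE {K : Type*} [Semiring K] (q : K) (m : ℕ) : K := ∑ i ∈ Finset.range m, q ^ i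

/-- `[m]_q! = [m]_q [m-1]_q ⋯ [1]_q`. -/
def qFactE {K : Type*} [Semiring K] (q : K) : ℕ → K
  | 0 => 1
  | m + 1 => qFactE q m * qIntE q (m + 1)

/-- The excedance number of a permutation of `{1,…,n}` (0-indexed model on `Fin n`). -/
def exc {n : ℕ} (σ : Equiv.Perm (Fin n)) : ℕ :=
  (Finset.univ.filter fun i : Fin n => (i : ℕ) < (σ i : ℕ)).card

/-- The major index: the sum of the (1-based) descent positions. -/
def maj {n : ℕ} (σ : Equiv.Perm (Fin n)) : ℕ :=
  ∑ j ∈ Finset.range n,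
    if h : j + 1 < n then
      (if (σ ⟨j + 1, h⟩ : ℕ) < (σ ⟨j, Nat.lt_of_succ_lt h⟩ : ℕ) then j + 1 else 0)
    else 0

/-- The descent number. -/
def desNum {n : ℕ} (σ : Equiv.Perm (Fin n)) : ℕ :=
  ∑ j ∈ Finset.range n,
    if h : j + 1 < n then
      (if (σ ⟨j + 1, h⟩ : ℕ) < (σ ⟨j, Nat.lt_of_succ_lt h⟩ : ℕ) then 1 else 0)
    else 0

/-- `maj_{≥k}`: the sum of the (1-based) positions `i` with `σ(i) - σ(i+1) ≥ k`. -/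
def majGe {n : ℕ} (k : ℕ) (σ : Equiv.Perm (Fin n)) : ℕ :=
  ∑ j ∈ Finset.range n,
    if h : j + 1 < n then
      (if (σ ⟨j + 1, h⟩ : ℕ) + k ≤ (σ ⟨j, Nat.lt_of_succ_lt h⟩ : ℕ) then j + 1 else 0)
    else 0

/-- `inv_{<k}`: the number of pairs `i < j` with `0 < σ(i) - σ(j) < k`. -/
def invLt {n : ℕ} (k : ℕ) (σ : Equiv.Perm (Fin n)) : ℕ :=
  (Finset.univ.filter fun p : Fin n × Fin n =>
    p.1 < p.2 ∧ (σ p.2 : ℕ) < (σ p.1 : ℕ) ∧ (σ p.1 : ℕ) < (σ p.2 : ℕ) + k).card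

/-- The Rawlings major index `rmaj_k = inv_{<k} + maj_{≥k}`. -/
def rmaj {n : ℕ} (k : ℕ) (σ : Equiv.Perm (Fin n)) : ℕ := invLt k σ + majGe k σ

/-- Two elements are incomparable with respect to a strict order relation `lt`. -/
def Incomp {n : ℕ} (lt : Fin n → Fin n → Prop) (a b : Fin n) : Prop :=
  a ≠ b ∧ ¬ lt a b ∧ ¬ lt b a

/-- A natural unit interval order on `[n]` (modeled on `Fin n`): a strict partial order
`lt` such that (i) `x <_P y` implies `x < y` in the natural order, and (ii) whenever
`x <_P z` and `y` is `P`-incomparable to both `x` and `z`, then `x < y < z` in the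
natural order.  (Irreflexivity and asymmetry follow from condition (i).) -/
structure NUIO (n : ℕ) where
  lt : Fin n → Fin n → Prop
  trans : ∀ a b c, lt a b → lt b c → lt a c
  natural : ∀ a b, lt a b → (a : ℕ) < (b : ℕ)
  unit : ∀ x y z, lt x z → Incomp lt x y → Incomp lt y z →
    (x : ℕ) < (y : ℕ) ∧ (y : ℕ) < (z : ℕ)

/-- `inv_G(σ)` where `G` is the incomparability graph of the relation `lt`:
the number of pairs `i < j` with `σ(i) > σ(j)` and `{σ(i), σ(j)}` an edge of `G`. -/
noncomputable def invInc {n : ℕ} (lt : Fin n → Fin n → Prop) (σ : Equiv.Perm (Fin n)) : ℕ :=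
  (Finset.univ.filter fun p : Fin n × Fin n =>
    p.1 < p.2 ∧ (σ p.2 : ℕ) < (σ p.1 : ℕ) ∧ Incomp lt (σ p.1) (σ p.2)).card

/-- `maj_P(σ)`: the sum of the (1-based) positions `i` with `σ(i) >_P σ(i+1)`. -/
noncomputable def majP {n : ℕ} (lt : Fin n → Fin n → Prop) (σ : Equiv.Perm (Fin n)) : ℕ :=
  ∑ j ∈ Finset.range n,
    if h : j + 1 < n then
      (if lt (σ ⟨j + 1, h⟩) (σ ⟨j, Nat.lt_of_succ_lt h⟩) then j + 1 else 0)
    else 0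

/-- The number of edges of the incomparability graph of the relation `lt`. -/
noncomputable def numIncEdges {n : ℕ} (lt : Fin n → Fin n → Prop) : ℕ :=
  (Finset.univ.filter fun p : Fin n × Fin n => p.1 < p.2 ∧ Incomp lt p.1 p.2).card

/-- The fundamental quasisymmetric polynomial `F_{n,S}(x_1,…,x_N)` (0-indexed model:
`j ∈ S` encodes a required strict decrease between positions `j` and `j+1`,
i.e. the 1-based position `j+1 ∈ S` of the paper). -/
noncomputable def Fqs (N n : ℕ) (S : Finset ℕ) : MvPolynomial (Fin N) ℤ :=
  ∑ f ∈ Finset.univ.filter (fun f : Fin n → Fin N =>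
      (∀ i j : Fin n, i ≤ j → f j ≤ f i) ∧
      ∀ j ∈ S, ∀ h : j + 1 < n, f ⟨j + 1, h⟩ < f ⟨j, Nat.lt_of_succ_lt h⟩),
    ∏ i, MvPolynomial.X (f i)

/-- The set `Dex(σ)` (0-indexed model: `j` encodes the 1-based position `j+1`):
`j ∈ Dex(σ)` iff either (`σ(j) ≤ j` and `σ(j+1) > j+1`), or
(`σ(j) > j ↔ σ(j+1) > j+1` and `σ(j) > σ(j+1)`), all in the 0-indexed sense. -/
noncomputable def dexSet {n : ℕ} (σ : Equiv.Perm (Fin n)) : Finset ℕ :=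
  (Finset.range n).filter fun j => ∃ h : j + 1 < n,
    ((σ ⟨j, Nat.lt_of_succ_lt h⟩ : ℕ) ≤ j ∧ j + 1 < (σ ⟨j + 1, h⟩ : ℕ)) ∨
    (((j < (σ ⟨j, Nat.lt_of_succ_lt h⟩ : ℕ)) ↔ (j + 1 < (σ ⟨j + 1, h⟩ : ℕ))) ∧
      (σ ⟨j + 1, h⟩ : ℕ) < (σ ⟨j, Nat.lt_of_succ_lt h⟩ : ℕ))

/-- The ascent number of a coloring `c` of the incomparability graph of `lt`:
the number of edges `{i,j}` with `i < j` and `c i < c j`. -/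
noncomputable def ascC {n N : ℕ} (lt : Fin n → Fin n → Prop) (c : Fin n → Fin N) : ℕ :=
  (Finset.univ.filter fun p : Fin n × Fin n =>
    p.1 < p.2 ∧ Incomp lt p.1 p.2 ∧ (c p.1 : ℕ) < (c p.2 : ℕ)).card

/-- The chromatic quasisymmetric polynomial `X_G(x_1,…,x_N;t)` of the incomparability
graph `G` of `lt`, as a polynomial in `t` over `ℤ[x_1,…,x_N]`. -/
noncomputable def chromIncQSym (N n : ℕ) (lt : Fin n → Fin n → Prop) :
    Polynomial (MvPolynomial (Fin N) ℤ) :=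
  ∑ c ∈ Finset.univ.filter (fun c : Fin n → Fin N =>
      ∀ a b : Fin n, Incomp lt a b → c a ≠ c b),
    Polynomial.X ^ ascC lt c * Polynomial.C (∏ i, MvPolynomial.X (c i))

/-- `Des_P(σ)` (0-indexed model: `j` encodes the 1-based position `j+1`):
positions `j` with `σ(j) >_P σ(j+1)`. -/
noncomputable def desPSet {n : ℕ} (lt : Fin n → Fin n → Prop)
    (σ : Equiv.Perm (Fin n)) : Finset ℕ :=
  (Finset.range n).filter fun j =>
    ∃ h : j + 1 < n, lt (σ ⟨j + 1, h⟩) (σ ⟨j, Nat.lt_of_succ_lt h⟩)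

/-!
A pair `(σ, f)` contributing to `F_{n, [n-1] ∖ Des_P(σ)}` determines the colouring `c = f ∘ σ⁻¹`,
and `σ` lists the vertices by decreasing colour, `P`-decreasingly inside each colour class. For a
proper colouring `c` this reading order is a strict total order, so exactly one `σ` arises from
`c`; for an improper one none does. Under this correspondence the `G`-ascents of `c` are exactly
the `G`-inversions of `σ`.
-/

open Finset

theorem Finset.card_filter_lt_card_filter_of_rel {α : Type*} [Fintype α] {r : α → α → Prop}
    [IsTrans α r] [Std.Irrefl r] {a b : α} (hab : r a b) : #{x | r x a} < #{x | r x b} := by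
  refine card_lt_card ⟨fun x hx => ?_, fun hsub => ?_⟩
  · simp only [mem_filter, mem_univ, true_and] at hx ⊢
    exact _root_.trans hx hab
  · have : a ∈ ({x | r x a} : Finset α) := hsub (by simpa using hab)
    exact irrefl a (by simpa using this)

theorem Fin.rel_of_forall_rel_succ {α : Type*} {n : ℕ} {r : α → α → Prop} [IsTrans α r]
    {f : Fin n → α} (h : ∀ j (hj : j + 1 < n), r (f ⟨j, Nat.lt_of_succ_lt hj⟩) (f ⟨j + 1, hj⟩))
    {i j : Fin n} (hij : i < j) : r (f i) (f j) := by
  cases n with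
  | zero => exact i.elim0
  | succ m => exact (Fin.liftFun_iff_succ r).2 (fun k => h k k.succ.isLt) hij

section ReadingOrder

variable {n N : ℕ} {lt : Fin n → Fin n → Prop} {c : Fin n → Fin N} {σ : Equiv.Perm (Fin n)}

/-- `a` is read before `b`: higher colours first, and within a colour class `P`-larger first. -/
def Precedes (lt : Fin n → Fin n → Prop) (c : Fin n → Fin N) (a b : Fin n) : Prop :=
  c b < c a ∨ (c b = c a ∧ lt b a)

def SortsColoring (lt : Fin n → Fin n → Prop) (c : Fin n → Fin N) (σ : Equiv.Perm (Fin n)) :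
    Prop :=
  ∀ ⦃i j : Fin n⦄, i < j → Precedes lt c (σ i) (σ j)

theorem Incomp.symm {a b : Fin n} (h : Incomp lt a b) : Incomp lt b a :=
  ⟨h.1.symm, h.2.2, h.2.1⟩

instance [IsTrans (Fin n) lt] : IsTrans (Fin n) (Precedes lt c) where
  trans a b d := by
    rintro (hab | ⟨hab, lab⟩) (hbd | ⟨hbd, lbd⟩)
    · exact Or.inl (hbd.trans hab)
    · exact Or.inl (hbd ▸ hab)
    · exact Or.inl (hab ▸ hbd)
    · exact Or.inr ⟨hbd.trans hab, _root_.trans lbd lab⟩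

instance [Std.Irrefl lt] : Std.Irrefl (Precedes lt c) where
  irrefl a := by
    rintro (h | ⟨-, h⟩)
    exacts [h.false, irrefl a h]

theorem precedes_or_precedes (hc : ∀ a b, Incomp lt a b → c a ≠ c b) {a b : Fin n}
    (hab : a ≠ b) : Precedes lt c a b ∨ Precedes lt c b a := by
  rcases lt_trichotomy (c a) (c b) with h | h | h
  · exact Or.inr (Or.inl h)
  · by_cases hba : lt b a
    · exact Or.inl (Or.inr ⟨h.symm, hba⟩)
    by_cases hab' : lt a b
    · exact Or.inr (Or.inr ⟨h, hab'⟩)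
    exact absurd h (hc a b ⟨hab, hab', hba⟩)
  · exact Or.inl (Or.inl h)

noncomputable def numPreceding (lt : Fin n → Fin n → Prop) (c : Fin n → Fin N) (a : Fin n) : ℕ :=
  #{b | Precedes lt c b a}

noncomputable def sortPerm (lt : Fin n → Fin n → Prop) (c : Fin n → Fin N) : Equiv.Perm (Fin n) :=
  Tuple.sort (numPreceding lt c)

theorem numPreceding_lt_of_precedes [IsTrans (Fin n) lt] [Std.Irrefl lt] {a b : Fin n}
    (hab : Precedes lt c a b) : numPreceding lt c a < numPreceding lt c b :=
  card_filter_lt_card_filter_of_rel hab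

theorem SortsColoring.eq_sortPerm [IsTrans (Fin n) lt] [Std.Irrefl lt]
    (h : SortsColoring lt c σ) : σ = sortPerm lt c := by
  have hsm : StrictMono (numPreceding lt c ∘ σ) :=
    fun _ _ hij => numPreceding_lt_of_precedes (h hij)
  exact Tuple.eq_sort_iff.2 ⟨hsm.monotone, fun i j hij heq => absurd heq (hsm hij).ne⟩

theorem sortsColoring_sortPerm [IsTrans (Fin n) lt] [Std.Irrefl lt]
    (hc : ∀ a b, Incomp lt a b → c a ≠ c b) : SortsColoring lt c (sortPerm lt c) := by
  have hinj : Function.Injective (numPreceding lt c) := by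
    intro a b hab
    by_contra hne
    rcases precedes_or_precedes hc hne with h | h
    · exact (numPreceding_lt_of_precedes h).ne hab
    · exact (numPreceding_lt_of_precedes h).ne hab.symm
  have hsm : StrictMono (numPreceding lt c ∘ sortPerm lt c) :=
    (Tuple.monotone_sort _).strictMono_of_injective (hinj.comp (sortPerm lt c).injective)
  intro i j hij
  refine (precedes_or_precedes hc ((sortPerm lt c).injective.ne hij.ne)).resolve_right
    fun h => ?_
  exact (hsm hij).asymm (numPreceding_lt_of_precedes h)

theorem SortsColoring.antitone (h : SortsColoring lt c σ) : Antitone (fun i => c (σ i)) := by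
  intro i j hij
  rcases hij.lt_or_eq with hij | rfl
  · rcases h hij with h' | ⟨h', -⟩
    exacts [h'.le, h'.le]
  · exact le_rfl

theorem SortsColoring.lt_iff_of_incomp (h : SortsColoring lt c σ) {i j : Fin n}
    (hinc : Incomp lt (σ i) (σ j)) : i < j ↔ c (σ j) < c (σ i) := by
  refine ⟨fun hij => ?_, fun hc => ?_⟩
  · rcases h hij with h' | ⟨-, hl⟩
    exacts [h', absurd hl hinc.2.2]
  · by_contra hij
    exact (h.antitone (not_lt.1 hij)).not_gt hc

theorem SortsColoring.proper (h : SortsColoring lt c σ) :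
    ∀ a b, Incomp lt a b → c a ≠ c b := by
  intro a b hinc heq
  rcases lt_trichotomy (σ.symm a) (σ.symm b) with hab | hab | hab
  · have := (h.lt_iff_of_incomp (by simpa using hinc)).1 hab
    simp only [Equiv.apply_symm_apply] at this
    exact this.ne heq.symm
  · exact hinc.1 (σ.symm.injective hab)
  · have := (h.lt_iff_of_incomp (by simpa using hinc.symm)).1 hab
    simp only [Equiv.apply_symm_apply] at this
    exact this.ne heq

theorem filter_sortsColoring_eq [IsTrans (Fin n) lt] [Std.Irrefl lt] :
    ({σ | SortsColoring lt c σ} : Finset (Equiv.Perm (Fin n))) =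
      if ∀ a b, Incomp lt a b → c a ≠ c b then {sortPerm lt c} else ∅ := by
  split_ifs with hc
  · ext σ
    simp only [mem_filter, mem_univ, true_and, mem_singleton]
    exact ⟨(·.eq_sortPerm), fun h => h ▸ sortsColoring_sortPerm hc⟩
  · exact filter_false_of_mem fun σ _ h => hc h.proper

theorem SortsColoring.ascC_eq_invInc (h : SortsColoring lt c σ) : ascC lt c = invInc lt σ := by
  refine card_equiv ((Equiv.prodComm _ _).trans (σ.symm.prodCongr σ.symm)) fun ⟨a, b⟩ => ?_
  have key := h.lt_iff_of_incomp (i := σ.symm b) (j := σ.symm a)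
  simp only [Equiv.apply_symm_apply] at key
  simp only [mem_filter, mem_univ, true_and, Equiv.trans_apply, Equiv.prodComm_apply,
    Prod.swap_prod_mk, Equiv.prodCongr_apply, Prod.map_apply, Equiv.apply_symm_apply,
    Fin.val_fin_lt]
  exact ⟨fun ⟨hab, hinc, hc⟩ => ⟨(key hinc.symm).2 hc, hab, hinc.symm⟩,
    fun ⟨hba, hab, hinc⟩ => ⟨hab, hinc.symm, (key hinc).1 hba⟩⟩

theorem fqs_condition_iff_sortsColoring [IsTrans (Fin n) lt] :
    ((∀ i j : Fin n, i ≤ j → c (σ j) ≤ c (σ i)) ∧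
      ∀ j ∈ range (n - 1) \ desPSet lt σ, ∀ h : j + 1 < n,
        c (σ ⟨j + 1, h⟩) < c (σ ⟨j, Nat.lt_of_succ_lt h⟩)) ↔ SortsColoring lt c σ := by
  constructor
  · rintro ⟨hanti, hstrict⟩ i j hij
    refine Fin.rel_of_forall_rel_succ (f := σ) (fun k hk => ?_) hij
    rcases (hanti _ _ (Fin.mk_le_mk.2 k.le_succ)).lt_or_eq with hlt | heq
    · exact Or.inl hlt
    refine Or.inr ⟨heq, by_contra fun hdes => (hstrict k ?_ hk).ne heq⟩
    exact mem_sdiff.2 ⟨mem_range.2 (by omega), fun hk' => hdes (mem_filter.1 hk').2.2⟩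
  · refine fun h => ⟨fun i j hij => h.antitone hij, fun j hj hj1 => ?_⟩
    rcases h (Fin.mk_lt_mk.2 j.lt_succ_self) with hlt | ⟨-, hdes⟩
    · exact hlt
    · exact absurd (mem_filter.2 ⟨mem_range.2 (by omega), hj1, hdes⟩) (mem_sdiff.1 hj).2

theorem X_pow_invInc_mul_C_fqs [IsTrans (Fin n) lt] (σ : Equiv.Perm (Fin n)) :
    (Polynomial.X ^ invInc lt σ * Polynomial.C (Fqs N n (range (n - 1) \ desPSet lt σ)) :
        Polynomial (MvPolynomial (Fin N) ℤ)) =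
      ∑ c ∈ {c | SortsColoring lt c σ},
        Polynomial.X ^ ascC lt c * Polynomial.C (∏ i, MvPolynomial.X (c i)) := by
  rw [Fqs, map_sum, mul_sum]
  symm
  refine sum_equiv (σ.symm.arrowCongr (Equiv.refl _)) (fun c => ?_) (fun c hc => ?_)
  · simpa using fqs_condition_iff_sortsColoring.symm
  · simp only [mem_filter, mem_univ, true_and] at hc
    rw [hc.ascC_eq_invInc]
    simp [Equiv.prod_comp σ fun i => (MvPolynomial.X (c i) : MvPolynomial (Fin N) ℤ)]

end ReadingOrder

theorem chromatic_qsym_fundamental_expansion_general (n N : ℕ)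
    (lt : Fin n → Fin n → Prop)
    (htrans : ∀ a b c, lt a b → lt b c → lt a c)
    (hirrefl : ∀ a, ¬ lt a a) :
    chromIncQSym N n lt =
      ∑ σ : Equiv.Perm (Fin n),
        Polynomial.X ^ invInc lt σ *
          Polynomial.C (Fqs N n (Finset.range (n - 1) \ desPSet lt σ)) := by
  have : IsTrans (Fin n) lt := ⟨htrans⟩
  have : Std.Irrefl lt := ⟨hirrefl⟩
  calc chromIncQSym N n lt
      = ∑ c : Fin n → Fin N, ∑ σ ∈ {σ | SortsColoring lt c σ},
          Polynomial.X ^ ascC lt c * Polynomial.C (∏ i, MvPolynomial.X (c i)) := by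
        rw [chromIncQSym, sum_filter]
        refine sum_congr rfl fun c _ => ?_
        rw [filter_sortsColoring_eq]
        split_ifs <;> simp
    _ = ∑ σ : Equiv.Perm (Fin n), ∑ c ∈ {c | SortsColoring lt c σ},
          Polynomial.X ^ ascC lt c * Polynomial.C (∏ i, MvPolynomial.X (c i)) :=
        sum_comm' fun _ _ => by simp
    _ = _ := sum_congr rfl fun σ _ => (X_pow_invInc_mul_C_fqs σ).symm

/-- for any poset `P` on `[n]` with incomparability graph `G`,
`X_G(x;t) = ∑_{σ ∈ S_n} t^{inv_G σ} F_{n, [n-1] ∖ Des_P(σ)}(x_1,…,x_N)`. -/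
theorem chromatic_qsym_fundamental_expansion (n N : ℕ) (hN : 1 ≤ N)
    (lt : Fin n → Fin n → Prop)
    (htrans : ∀ a b c, lt a b → lt b c → lt a c)
    (hirrefl : ∀ a, ¬ lt a a) :
    chromIncQSym N n lt =
      ∑ σ : Equiv.Perm (Fin n),
        Polynomial.X ^ invInc lt σ *
          Polynomial.C (Fqs N n (Finset.range (n - 1) \ desPSet lt σ)) :=
  chromatic_qsym_fundamental_expansion_general n N lt htrans hirrefl
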